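/- Let m, n₁,…,n_l be positive integers, n := m + n₁ + ⋯ + n_l, and let T be the polynomial ring over 𝔽₂ = ℤ/2 in the indeterminates α₁,…,α_m and β_i^{(p)} for 1 ≤ p ≤ l, 1 ≤ i ≤ ⌊n_p/2⌋. With the conventions α₀ := 1, α_i := α_{2m+1−i} for m < i ≤ 2m+1, α_i := 0 for i < 0 or i > 2m+1, β_0^{(p)} := 1, β_i^{(p)} := β_{n_p−i}^{(p)} for ⌊n_p/2⌋ < i ≤ n_p, β_i^{(p)} := 0 for i < 0 or i > n_p, define μ_j := Σ_{a₁+⋯+a_l = j} β_{a₁}^{(1)}⋯β_{a_l}^{(l)} and ξ_k := Σ_{i=0}^{⌊k/2⌋} α_{k−2i}·μ_i + (binom(2n+1, k) mod 2). Set h' := ⌊m/2⌋ + ⌊n₁/2⌋ + ⋯ + ⌊n_l/2⌋ and let Î be the ideal of T generated by {ξ_i : 1 ≤ i ≤ m, i odd} ∪ {ξ_i : 2 ≤ i ≤ 2h', i even}. Then for every 1 ≤ j ≤ n, the element ξ_j lies in Î. -/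

import Mathlib

open MvPolynomial

/-- A sequence (given as a list) `a₁, …, aₙ` in a commutative ring `A` is `A`-regular if for
each `i`, `aᵢ` is not a zero divisor on `A ⧸ (a₁, …, a_{i-1})`. -/
def IsRegularSeq {A : Type*} [CommRing A] (l : List A) : Prop :=
  ∀ (i : ℕ) (h : i < l.length), ∀ x : A,
    l.get ⟨i, h⟩ * x ∈ Ideal.span {y | y ∈ l.take i} →
      x ∈ Ideal.span {y | y ∈ l.take i}

/-- The element `α_i` of the polynomial ring `T` over `𝔽₂` in the indeterminates
`α₁, …, α_m` and `β_i^{(p)}`, with the conventions `α_0 = 1`, `α_i = α_{2m+1−i}` for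
`m < i ≤ 2m+1`, and `α_i = 0` for `i > 2m+1`. -/
noncomputable def alT (m l : ℕ) (n : Fin l → ℕ) (i : ℕ) :
    MvPolynomial (Fin m ⊕ Σ p : Fin l, Fin (n p / 2)) (ZMod 2) :=
  if h : i ≤ 2 * m + 1 then
    (if h1 : 1 ≤ min i (2 * m + 1 - i) then
      X (Sum.inl ⟨min i (2 * m + 1 - i) - 1, by omega⟩) else 1)
  else 0

/-- The element `β_i^{(p)}` of `T`, with the conventions `β_0^{(p)} = 1`,
`β_i^{(p)} = β_{n_p−i}^{(p)}` for `⌊n_p/2⌋ < i ≤ n_p`, and `β_i^{(p)} = 0` for `i > n_p`. -/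
noncomputable def beT (m l : ℕ) (n : Fin l → ℕ) (p : Fin l) (i : ℕ) :
    MvPolynomial (Fin m ⊕ Σ p : Fin l, Fin (n p / 2)) (ZMod 2) :=
  if h : i ≤ n p then
    (if h1 : 1 ≤ min i (n p - i) then X (Sum.inr ⟨p, ⟨min i (n p - i) - 1, by omega⟩⟩) else 1)
  else 0

/-- `μ_j := Σ_{a₁+⋯+a_l = j} β_{a₁}^{(1)} ⋯ β_{a_l}^{(l)}`. -/
noncomputable def muT (m l : ℕ) (n : Fin l → ℕ) (j : ℕ) :
    MvPolynomial (Fin m ⊕ Σ p : Fin l, Fin (n p / 2)) (ZMod 2) :=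
  ∑ a ∈ (Fintype.piFinset fun _ : Fin l => Finset.range (j + 1)).filter
      (fun a => ∑ p, a p = j),
    ∏ p, beT m l n p (a p)

/-- `ξ_k := Σ_{i=0}^{⌊k/2⌋} α_{k−2i}·μ_i + (binom(2n+1, k) mod 2)`, with
`n = m + n₁ + ⋯ + n_l`. -/
noncomputable def xiT (m l : ℕ) (n : Fin l → ℕ) (k : ℕ) :
    MvPolynomial (Fin m ⊕ Σ p : Fin l, Fin (n p / 2)) (ZMod 2) :=
  (∑ i ∈ Finset.range (k / 2 + 1), alT m l n (k - 2 * i) * muT m l n i) +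
    (Nat.choose (2 * (m + ∑ p, n p) + 1) k :
      MvPolynomial (Fin m ⊕ Σ p : Fin l, Fin (n p / 2)) (ZMod 2))

/-- The subring `B ⊆ T` generated by all the indeterminates `β_i^{(p)}`. -/
noncomputable def BsubT (m l : ℕ) (n : Fin l → ℕ) :
    Subring (MvPolynomial (Fin m ⊕ Σ p : Fin l, Fin (n p / 2)) (ZMod 2)) :=
  Subring.closure (Set.range fun v : Σ p : Fin l, Fin (n p / 2) => X (Sum.inr v))

/-!
The `ξ_k` are the coefficients of `Θ = A(X) M(X²) + (1 + X)^(2n+1)`, where `A = ∑ α_i X^i` and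
`M = ∏_p B_p` with `B_p = ∑ β_i^{(p)} X^i`, and `A`, `B_p` are palindromic. Over `𝔽₂` a palindromic
polynomial of odd degree vanishes at `1`, so `M = (1 + X)^e Q` with `Q` palindromic of degree `2H`
(`H = ∑ ⌊n_p/2⌋`, `e = ∑ (n_p mod 2)`), and `Θ = (1 + X²)^e Θ̂` with
`Θ̂ = A(X) Q(X²) + (1 + X)^(2N+1)`, `N = m + 2H`, palindromic of degree `2N + 1`.

Since `(1 + X²)^e` has constant term `1`, the even coefficients `ζ_{2r}` of `Θ̂` with `r ≤ h'` lie
in `Î` by triangularity. In the same way `α_{2k} + α_{2k+1} ∈ Î`, from `ξ_{2k} + ξ_{2k+1}` when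
`2k + 1 ≤ m` and by the symmetry of `A` otherwise; the pair sums `ζ_{2k} + ζ_{2k+1}` are
combinations of these. The symmetry `ζ_{2k+1} = ζ_{2(N-k)}` then puts every `ζ_k`, hence every `ξ_j`, in `Î`.
-/

namespace Polynomial

open Finset

section CommSemiring

variable {R : Type*} [CommSemiring R]

theorem coeff_mul_expand_two (f g : R[X]) (k : ℕ) :
    (f * expand R 2 g).coeff k =
      ∑ i ∈ range (k / 2 + 1), f.coeff (k - 2 * i) * g.coeff i := by
  induction g using Polynomial.induction_on' with
  | add g h hg hh => simp only [map_add, mul_add, coeff_add, hg, hh, ← sum_add_distrib]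
  | monomial d b =>
    rw [expand_monomial, mul_comm d 2, ← C_mul_X_pow_eq_monomial, ← mul_assoc,
      coeff_mul_X_pow', coeff_mul_C]
    simp only [Polynomial.coeff_monomial, mul_ite, mul_zero, sum_ite_eq, mem_range]
    split_ifs <;> first | rfl | omega

theorem coeff_mul_expand_two_two_mul (f g : R[X]) (k : ℕ) :
    (f * expand R 2 g).coeff (2 * k) =
      ∑ i ∈ range (k + 1), f.coeff (2 * (k - i)) * g.coeff i := by
  rw [coeff_mul_expand_two, Nat.mul_div_cancel_left k two_pos]
  exact sum_congr rfl fun i _ => by rw [Nat.mul_sub]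

theorem coeff_mul_expand_two_two_mul_add_one (f g : R[X]) (k : ℕ) :
    (f * expand R 2 g).coeff (2 * k + 1) =
      ∑ i ∈ range (k + 1), f.coeff (2 * (k - i) + 1) * g.coeff i := by
  rw [coeff_mul_expand_two, show (2 * k + 1) / 2 = k by omega]
  refine sum_congr rfl fun i hi => ?_
  rw [show 2 * k + 1 - 2 * i = 2 * (k - i) + 1 by rw [mem_range] at hi; omega]

theorem coeff_prod_univ {ι : Type*} [Fintype ι] [DecidableEq ι] (f : ι → R[X]) (j : ℕ) :
    (∏ p, f p).coeff j =
      ∑ a ∈ (Fintype.piFinset fun _ : ι => range (j + 1)).filter (fun a => ∑ p, a p = j),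
        ∏ p, (f p).coeff (a p) := by
  rw [← coeff_coe, ← coeToPowerSeries.ringHom_apply, map_prod, PowerSeries.coeff_prod]
  simp only [coeToPowerSeries.ringHom_apply, coeff_coe]
  refine sum_nbij' (⇑) Finsupp.equivFunOnFinite.symm (fun a ha => ?_) (fun a ha => ?_)
    (fun a _ => Finsupp.equivFunOnFinite_symm_coe a) (fun _ _ => rfl) (fun _ _ => rfl)
  · simp only [mem_finsuppAntidiag, mem_filter, Fintype.mem_piFinset, mem_range] at ha ⊢
    exact ⟨fun p => Nat.lt_succ_of_le (ha.1 ▸ single_le_sum (fun _ _ => Nat.zero_le _)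
      (mem_univ p)), ha.1⟩
  · simp only [mem_finsuppAntidiag, mem_filter] at ha ⊢
    simpa using ha.2

theorem coeff_sum_range_monomial (a : ℕ → R) (N k : ℕ) :
    (∑ i ∈ range N, monomial i (a i)).coeff k = if k < N then a k else 0 := by
  simp only [finsetSum_coeff, Polynomial.coeff_monomial, sum_ite_eq', mem_range]

def pairSum (f : R[X]) (k : ℕ) : R := f.coeff (2 * k) + f.coeff (2 * k + 1)

theorem pairSum_add (f g : R[X]) (k : ℕ) : pairSum (f + g) k = pairSum f k + pairSum g k := by
  simp only [pairSum, coeff_add, add_add_add_comm]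

theorem pairSum_mul_expand_two (f g : R[X]) (k : ℕ) :
    pairSum (f * expand R 2 g) k = ∑ i ∈ range (k + 1), pairSum f (k - i) * g.coeff i := by
  simp only [pairSum, coeff_mul_expand_two_two_mul, coeff_mul_expand_two_two_mul_add_one,
    ← sum_add_distrib, add_mul]

def IsPalindromic (d : ℕ) (f : R[X]) : Prop := f.natDegree ≤ d ∧ reflect d f = f

namespace IsPalindromic

variable {d e : ℕ} {f g : R[X]}

theorem of_coeff (hdeg : ∀ i, d < i → f.coeff i = 0)
    (hsymm : ∀ i ≤ d, f.coeff (d - i) = f.coeff i) : IsPalindromic d f := by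
  refine ⟨natDegree_le_iff_coeff_eq_zero.2 hdeg, Polynomial.ext fun i => ?_⟩
  rw [coeff_reflect]
  rcases le_or_gt i d with hi | hi
  · rw [revAt_le hi, hsymm i hi]
  · rw [revAt_eq_self_of_lt hi]

theorem coeff_eq_zero (hf : IsPalindromic d f) {i : ℕ} (hi : d < i) : f.coeff i = 0 :=
  coeff_eq_zero_of_natDegree_lt (hf.1.trans_lt hi)

theorem coeff_sub (hf : IsPalindromic d f) {i : ℕ} (hi : i ≤ d) :
    f.coeff (d - i) = f.coeff i := by
  conv_rhs => rw [← hf.2, coeff_reflect, revAt_le hi]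

theorem mul (hf : IsPalindromic d f) (hg : IsPalindromic e g) :
    IsPalindromic (d + e) (f * g) :=
  ⟨natDegree_mul_le_of_le hf.1 hg.1, by rw [reflect_mul f g hf.1 hg.1, hf.2, hg.2]⟩

theorem add (hf : IsPalindromic d f) (hg : IsPalindromic d g) : IsPalindromic d (f + g) :=
  ⟨natDegree_add_le_of_degree_le hf.1 hg.1, by rw [reflect_add, hf.2, hg.2]⟩

theorem prod {ι : Type*} {s : Finset ι} {d : ι → ℕ} {f : ι → R[X]}
    (hf : ∀ p ∈ s, IsPalindromic (d p) (f p)) :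
    IsPalindromic (∑ p ∈ s, d p) (∏ p ∈ s, f p) := by
  induction s using Finset.cons_induction with
  | empty => exact ⟨natDegree_one.le, by simp⟩
  | cons a s ha ih =>
    rw [prod_cons, sum_cons]
    exact (hf a (mem_cons_self a s)).mul (ih fun p hp => hf p (mem_cons_of_mem hp))

theorem expand_two (hf : IsPalindromic d f) : IsPalindromic (2 * d) (expand R 2 f) := by
  refine of_coeff (fun i hi => ?_) (fun i hi => ?_)
  · rw [coeff_expand two_pos]
    split_ifs
    · exact hf.coeff_eq_zero (by omega)
    · rfl
  · rw [coeff_expand two_pos, coeff_expand two_pos]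
    by_cases h : 2 ∣ i
    · rw [if_pos (by omega), if_pos h, show (2 * d - i) / 2 = d - i / 2 by omega,
        hf.coeff_sub (by omega)]
    · rw [if_neg (by omega), if_neg h]

theorem pairSum_sub (hf : IsPalindromic (2 * d + 1) f) {k : ℕ} (hk : k ≤ d) :
    pairSum f (d - k) = pairSum f k := by
  rw [pairSum, pairSum, ← hf.coeff_sub (i := 2 * k + 1) (by omega),
    ← hf.coeff_sub (i := 2 * k) (by omega), show 2 * d + 1 - (2 * k + 1) = 2 * (d - k) by omega,
    show 2 * d + 1 - 2 * k = 2 * (d - k) + 1 by omega, add_comm]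

end IsPalindromic

theorem isPalindromic_X_add_one_pow (d : ℕ) : IsPalindromic d ((X + 1 : R[X]) ^ d) :=
  .of_coeff (fun i hi => by rw [coeff_X_add_one_pow, Nat.choose_eq_zero_of_lt hi, Nat.cast_zero])
    (fun i hi => by rw [coeff_X_add_one_pow, coeff_X_add_one_pow, Nat.choose_symm hi])

end CommSemiring

section CharTwo

variable {R : Type*} [CommRing R] [CharP R 2]

theorem X_add_one_sq : (X + 1 : R[X]) ^ 2 = expand R 2 (X + 1) := by
  rw [CharTwo.add_sq, one_pow, map_add, expand_X, map_one]

theorem pairSum_X_add_one (k : ℕ) : pairSum (X + 1 : R[X]) k = 0 := by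
  cases k with
  | zero => simp [pairSum, coeff_one, CharTwo.add_self_eq_zero]
  | succ k => simp [pairSum, coeff_X, coeff_one]; omega

theorem pairSum_X_add_one_pow_two_mul_add_one (w k : ℕ) :
    pairSum ((X + 1 : R[X]) ^ (2 * w + 1)) k = 0 := by
  rw [pow_succ', pow_mul, X_add_one_sq, ← map_pow, pairSum_mul_expand_two]
  exact sum_eq_zero fun i _ => by rw [pairSum_X_add_one, zero_mul]

theorem IsPalindromic.eval_one_eq_zero {d : ℕ} {f : R[X]} (hf : IsPalindromic d f)
    (hd : Odd d) : f.eval 1 = 0 := by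
  rw [eval_eq_sum_range' (Nat.lt_succ_of_le hf.1)]
  simp only [one_pow, mul_one]
  refine sum_involution (fun i _ => d - i) (fun i hi => ?_) (fun i hi _ => ?_)
    (fun i hi => ?_) (fun i hi => ?_)
  · rw [hf.coeff_sub (by rw [mem_range] at hi; omega), CharTwo.add_self_eq_zero]
  · obtain ⟨c, rfl⟩ := hd
    omega
  · simp only [mem_range] at hi ⊢
    omega
  · simp only [mem_range] at hi
    omega

theorem IsPalindromic.exists_eq_X_add_one_pow_mul {d : ℕ} {f : R[X]} (hf : IsPalindromic d f) :
    ∃ g, IsPalindromic (2 * (d / 2)) g ∧ f = (X + 1) ^ (d % 2) * g := by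
  rcases Nat.even_or_odd d with hd | hd
  · refine ⟨f, ?_, by rw [Nat.even_iff.1 hd, pow_zero, one_mul]⟩
    rwa [Nat.two_mul_div_two_of_even hd]
  have hmonic : (X + 1 : R[X]).Monic := by simpa using monic_X_add_C (1 : R)
  have hfactor : f = (X + 1) * (f /ₘ (X - C 1)) := by
    rw [← CharTwo.sub_eq_add, ← map_one C]
    exact (mul_divByMonic_eq_iff_isRoot.2 (hf.eval_one_eq_zero hd)).symm
  set g := f /ₘ (X - C 1)
  have hg : g.natDegree ≤ 2 * (d / 2) := by
    have : Nontrivial R := CharP.nontrivial_of_char_ne_one (v := 2) (by norm_num)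
    rw [natDegree_divByMonic _ (monic_X_sub_C 1), natDegree_X_sub_C]
    have := hf.1
    omega
  have hlin : IsPalindromic 1 (X + 1 : R[X]) :=
    pow_one (X + 1 : R[X]) ▸ isPalindromic_X_add_one_pow 1
  refine ⟨g, ⟨hg, hmonic.isRegular.left ?_⟩, by rw [Nat.odd_iff.1 hd, pow_one]; exact hfactor⟩
  calc (X + 1) * reflect (2 * (d / 2)) g = reflect 1 (X + 1) * reflect (2 * (d / 2)) g := by
        rw [hlin.2]
    _ = reflect d f := by
        rw [← reflect_mul _ _ hlin.1 hg, ← hfactor, show 1 + 2 * (d / 2) = d by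
          rw [Nat.odd_iff] at hd; omega]
    _ = (X + 1) * g := by rw [hf.2, ← hfactor]

end CharTwo

end Polynomial

theorem Ideal.mem_of_forall_le_sum_mul_mem {R : Type*} [CommRing R] {I : Ideal R} {c z : ℕ → R}
    (hc : c 0 = 1) {k : ℕ} (h : ∀ j ≤ k, ∑ i ∈ Finset.range (j + 1), z (j - i) * c i ∈ I) :
    z k ∈ I := by
  induction k using Nat.strong_induction_on with
  | _ k ih =>
  have hsum := h k le_rfl
  rw [Finset.sum_range_succ', Nat.sub_zero, hc, mul_one] at hsum
  refine (I.add_mem_iff_right (Ideal.sum_mem _ fun i hi => Ideal.mul_mem_right _ _ ?_)).1 hsum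
  rw [Finset.mem_range] at hi
  exact ih _ (by omega) fun j hj => h j (by omega)

namespace XiIdeal

open Finset Polynomial

variable (m l : ℕ) (n : Fin l → ℕ)

abbrev T := MvPolynomial (Fin m ⊕ Σ p : Fin l, Fin (n p / 2)) (ZMod 2)

theorem alT_zero : alT m l n 0 = 1 := by
  rw [alT, dif_pos (by omega), dif_neg (by omega)]

theorem alT_eq_zero {i : ℕ} (h : 2 * m + 1 < i) : alT m l n i = 0 := by
  rw [alT, dif_neg (by omega)]

theorem alT_symm {i : ℕ} (h : i ≤ 2 * m + 1) : alT m l n (2 * m + 1 - i) = alT m l n i := by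
  rw [alT, alT, dif_pos (by omega), dif_pos h]
  by_cases h1 : 1 ≤ min i (2 * m + 1 - i)
  · rw [dif_pos (by omega), dif_pos h1]
    congr 3
    omega
  · rw [dif_neg (by omega), dif_neg h1]

theorem beT_zero (p : Fin l) : beT m l n p 0 = 1 := by
  rw [beT, dif_pos (by omega), dif_neg (by omega)]

theorem beT_eq_zero (p : Fin l) {i : ℕ} (h : n p < i) : beT m l n p i = 0 := by
  rw [beT, dif_neg (by omega)]

theorem beT_symm (p : Fin l) {i : ℕ} (h : i ≤ n p) : beT m l n p (n p - i) = beT m l n p i := by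
  rw [beT, beT, dif_pos (by omega), dif_pos h]
  by_cases h1 : 1 ≤ min i (n p - i)
  · rw [dif_pos (by omega), dif_pos h1]
    congr 4
    omega
  · rw [dif_neg (by omega), dif_neg h1]

noncomputable def alphaPoly : (T m l n)[X] :=
  ∑ i ∈ range (2 * m + 2), monomial i (alT m l n i)

noncomputable def betaPoly (p : Fin l) : (T m l n)[X] :=
  ∑ i ∈ range (n p + 1), monomial i (beT m l n p i)

noncomputable def muPoly : (T m l n)[X] := ∏ p, betaPoly m l n p

noncomputable def theta (M : (T m l n)[X]) (w : ℕ) : (T m l n)[X] :=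
  alphaPoly m l n * expand _ 2 M + (Polynomial.X + 1) ^ (2 * w + 1)

theorem coeff_alphaPoly (i : ℕ) : (alphaPoly m l n).coeff i = alT m l n i := by
  rw [alphaPoly, coeff_sum_range_monomial, ite_eq_left_iff, not_lt]
  exact fun h => (alT_eq_zero m l n h).symm

theorem coeff_betaPoly (p : Fin l) (i : ℕ) : (betaPoly m l n p).coeff i = beT m l n p i := by
  rw [betaPoly, coeff_sum_range_monomial, ite_eq_left_iff, not_lt]
  exact fun h => (beT_eq_zero m l n p h).symm

theorem isPalindromic_alphaPoly : IsPalindromic (2 * m + 1) (alphaPoly m l n) :=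
  .of_coeff (fun i hi => by rw [coeff_alphaPoly, alT_eq_zero m l n hi])
    (fun i hi => by rw [coeff_alphaPoly, coeff_alphaPoly, alT_symm m l n hi])

theorem isPalindromic_betaPoly (p : Fin l) : IsPalindromic (n p) (betaPoly m l n p) :=
  .of_coeff (fun i hi => by rw [coeff_betaPoly, beT_eq_zero m l n p hi])
    (fun i hi => by rw [coeff_betaPoly, coeff_betaPoly, beT_symm m l n p hi])

theorem coeff_muPoly (j : ℕ) : (muPoly m l n).coeff j = muT m l n j := by
  simp only [muPoly, coeff_prod_univ, coeff_betaPoly, muT]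

theorem muT_zero : muT m l n 0 = 1 := by
  rw [← coeff_muPoly, muPoly, coeff_zero_prod]
  exact prod_eq_one fun p _ => by rw [coeff_betaPoly, beT_zero]

theorem coeff_theta_muPoly (k : ℕ) :
    (theta m l n (muPoly m l n) (m + ∑ p, n p)).coeff k = xiT m l n k := by
  simp only [theta, Polynomial.coeff_add, coeff_mul_expand_two, coeff_alphaPoly, coeff_muPoly,
    coeff_X_add_one_pow, xiT]

theorem xiT_zero : xiT m l n 0 = 0 := by
  rw [xiT, Nat.zero_div, sum_range_one, Nat.sub_zero, alT_zero, muT_zero, one_mul,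
    Nat.choose_zero_right, Nat.cast_one, CharTwo.add_self_eq_zero]

theorem pairSum_theta (M : (T m l n)[X]) (w k : ℕ) :
    pairSum (theta m l n M w) k =
      ∑ i ∈ range (k + 1), pairSum (alphaPoly m l n) (k - i) * M.coeff i := by
  rw [theta, pairSum_add, pairSum_mul_expand_two, pairSum_X_add_one_pow_two_mul_add_one, add_zero]

theorem exists_muPoly_eq : ∃ Q : (T m l n)[X], IsPalindromic (2 * ∑ p, n p / 2) Q ∧
    muPoly m l n = (Polynomial.X + 1) ^ (∑ p, n p % 2) * Q := by
  choose g hg hfac using fun p => (isPalindromic_betaPoly m l n p).exists_eq_X_add_one_pow_mul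
  refine ⟨∏ p, g p, ?_, ?_⟩
  · rw [mul_sum]
    exact IsPalindromic.prod fun p _ => hg p
  · rw [muPoly, ← prod_pow_eq_pow_sum, ← prod_mul_distrib]
    exact prod_congr rfl fun p _ => hfac p

theorem theta_muPoly_eq {Q : (T m l n)[X]}
    (hQ : muPoly m l n = (Polynomial.X + 1) ^ (∑ p, n p % 2) * Q) :
    theta m l n (muPoly m l n) (m + ∑ p, n p) =
      theta m l n Q (m + 2 * ∑ p, n p / 2) * expand _ 2 ((Polynomial.X + 1) ^ (∑ p, n p % 2)) := by
  have hsum : ∑ p, n p = 2 * ∑ p, n p / 2 + ∑ p, n p % 2 := by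
    rw [mul_sum, ← sum_add_distrib]
    exact sum_congr rfl fun p _ => (Nat.div_add_mod _ 2).symm
  rw [theta, theta, hQ, hsum, map_mul, map_pow, ← X_add_one_sq]
  generalize (Polynomial.X + 1 : (T m l n)[X]) = Y
  ring

theorem isPalindromic_theta {Q : (T m l n)[X]} {d : ℕ} (hQ : IsPalindromic (2 * d) Q) :
    IsPalindromic (2 * (m + 2 * d) + 1) (theta m l n Q (m + 2 * d)) := by
  have h := (isPalindromic_alphaPoly m l n).mul hQ.expand_two
  rw [show 2 * m + 1 + 2 * (2 * d) = 2 * (m + 2 * d) + 1 by ring] at h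
  exact h.add (isPalindromic_X_add_one_pow _)

noncomputable def xiIdeal : Ideal (T m l n) :=
  Ideal.span
    ({x | ∃ i, Odd i ∧ 1 ≤ i ∧ i ≤ m ∧ x = xiT m l n i} ∪
      {x | ∃ i, Even i ∧ 2 ≤ i ∧ i ≤ 2 * (m / 2 + ∑ p, n p / 2) ∧ x = xiT m l n i})

theorem xiT_mem_of_odd {i : ℕ} (hi : Odd i) (him : i ≤ m) : xiT m l n i ∈ xiIdeal m l n :=
  Ideal.subset_span (Or.inl ⟨i, hi, hi.pos, him, rfl⟩)

theorem xiT_mem_of_even {i : ℕ} (hi : Even i) (hle : i ≤ 2 * (m / 2 + ∑ p, n p / 2)) :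
    xiT m l n i ∈ xiIdeal m l n := by
  rcases Nat.eq_zero_or_pos i with rfl | hpos
  · rw [xiT_zero]
    exact zero_mem _
  · exact Ideal.subset_span (Or.inr ⟨i, hi, by obtain ⟨c, rfl⟩ := hi; omega, hle, rfl⟩)

theorem pairSum_alphaPoly_mem_of_two_mul_add_one_le {k : ℕ} (hk : 2 * k + 1 ≤ m) :
    pairSum (alphaPoly m l n) k ∈ xiIdeal m l n := by
  refine Ideal.mem_of_forall_le_sum_mul_mem (muT_zero m l n) fun j hj => ?_
  have h := pairSum_theta m l n (muPoly m l n) (m + ∑ p, n p) j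
  simp only [coeff_muPoly] at h
  rw [← h, pairSum, coeff_theta_muPoly, coeff_theta_muPoly]
  exact add_mem (xiT_mem_of_even m l n (even_two_mul j) (by omega))
    (xiT_mem_of_odd m l n (odd_two_mul_add_one j) (by omega))

theorem pairSum_alphaPoly_mem (k : ℕ) : pairSum (alphaPoly m l n) k ∈ xiIdeal m l n := by
  have hA := isPalindromic_alphaPoly m l n
  rcases lt_or_ge m k with hmk | hkm
  · rw [pairSum, hA.coeff_eq_zero (by omega), hA.coeff_eq_zero (by omega), add_zero]
    exact zero_mem _
  rcases lt_trichotomy (2 * k) m with hlt | heq | hgt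
  · exact pairSum_alphaPoly_mem_of_two_mul_add_one_le m l n (by omega)
  · rw [pairSum, ← hA.coeff_sub (i := 2 * k + 1) (by omega),
      show 2 * m + 1 - (2 * k + 1) = 2 * k by omega, CharTwo.add_self_eq_zero]
    exact zero_mem _
  · rw [← hA.pairSum_sub hkm]
    exact pairSum_alphaPoly_mem_of_two_mul_add_one_le m l n (by omega)

theorem coeff_theta_two_mul_mem {Q : (T m l n)[X]}
    (hQ : muPoly m l n = (Polynomial.X + 1) ^ (∑ p, n p % 2) * Q) {r : ℕ}
    (hr : r ≤ m / 2 + ∑ p, n p / 2) :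
    (theta m l n Q (m + 2 * ∑ p, n p / 2)).coeff (2 * r) ∈ xiIdeal m l n := by
  refine Ideal.mem_of_forall_le_sum_mul_mem (c := fun i => ((∑ p, n p % 2).choose i : T m l n))
    (z := fun r => (theta m l n Q (m + 2 * ∑ p, n p / 2)).coeff (2 * r)) (by simp)
    fun j hj => ?_
  have h := coeff_mul_expand_two_two_mul (theta m l n Q (m + 2 * ∑ p, n p / 2))
    ((Polynomial.X + 1) ^ (∑ p, n p % 2)) j
  simp only [coeff_X_add_one_pow] at h
  rw [← h, ← theta_muPoly_eq m l n hQ, coeff_theta_muPoly]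
  exact xiT_mem_of_even m l n (even_two_mul j) (by omega)

theorem coeff_theta_mem {Q : (T m l n)[X]} (hpal : IsPalindromic (2 * ∑ p, n p / 2) Q)
    (hQ : muPoly m l n = (Polynomial.X + 1) ^ (∑ p, n p % 2) * Q) (k : ℕ) :
    (theta m l n Q (m + 2 * ∑ p, n p / 2)).coeff k ∈ xiIdeal m l n := by
  set N := m + 2 * ∑ p, n p / 2
  have hζ := isPalindromic_theta m l n hpal
  have hpair (k : ℕ) : pairSum (theta m l n Q N) k ∈ xiIdeal m l n := by
    rw [pairSum_theta]
    exact sum_mem fun i _ => Ideal.mul_mem_right _ _ (pairSum_alphaPoly_mem m l n _)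
  have heven (k : ℕ) : (theta m l n Q N).coeff (2 * k) ∈ xiIdeal m l n := by
    rcases le_or_gt k (m / 2 + ∑ p, n p / 2) with hsmall | hlarge
    · exact coeff_theta_two_mul_mem m l n hQ hsmall
    rcases le_or_gt k N with hkN | hNk
    · refine (Ideal.add_mem_iff_left _ ?_).1 (hpair k)
      rw [← hζ.coeff_sub (by omega), show 2 * N + 1 - (2 * k + 1) = 2 * (N - k) by omega]
      exact coeff_theta_two_mul_mem m l n hQ (by omega)
    · rw [hζ.coeff_eq_zero (by omega)]
      exact zero_mem _
  obtain ⟨r, rfl | rfl⟩ := Nat.even_or_odd' k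
  · exact heven r
  · exact (Ideal.add_mem_iff_right _ (heven r)).1 (hpair r)

end XiIdeal

theorem stmt_19_general (m l : ℕ) (n : Fin l → ℕ) (j : ℕ) :
    xiT m l n j ∈
      Ideal.span
        ({x | ∃ i, Odd i ∧ 1 ≤ i ∧ i ≤ m ∧ x = xiT m l n i} ∪
          {x | ∃ i, Even i ∧ 2 ≤ i ∧ i ≤ 2 * (m / 2 + ∑ p, n p / 2) ∧ x = xiT m l n i}) := by
  obtain ⟨Q, hpal, hQ⟩ := XiIdeal.exists_muPoly_eq m l n
  rw [← XiIdeal.coeff_theta_muPoly, XiIdeal.theta_muPoly_eq m l n hQ,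
    Polynomial.coeff_mul_expand_two]
  exact Ideal.sum_mem _ fun i _ => Ideal.mul_mem_right _ _ (XiIdeal.coeff_theta_mem m l n hpal hQ _)

/-- For every `1 ≤ j ≤ n`, the element `ξ_j` lies in the ideal `Î` of `T` generated by
`{ξ_i : 1 ≤ i ≤ m, i odd} ∪ {ξ_i : 2 ≤ i ≤ 2h', i even}`, with
`h' = ⌊m/2⌋ + ⌊n₁/2⌋ + ⋯ + ⌊n_l/2⌋` and `n = m + n₁ + ⋯ + n_l`. -/
theorem stmt_19 (m l : ℕ) (hm : 1 ≤ m) (hl : 1 ≤ l) (n : Fin l → ℕ) (hn : ∀ p, 1 ≤ n p)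
    (j : ℕ) (hj1 : 1 ≤ j) (hj2 : j ≤ m + ∑ p, n p) :
    xiT m l n j ∈
      Ideal.span
        ({x | ∃ i, Odd i ∧ 1 ≤ i ∧ i ≤ m ∧ x = xiT m l n i} ∪
          {x | ∃ i, Even i ∧ 2 ≤ i ∧ i ≤ 2 * (m / 2 + ∑ p, n p / 2) ∧ x = xiT m l n i}) :=
  stmt_19_general m l n j
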